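/- Let l = 2k with k odd, g ≥ 1, and m_1,...,m_r > 1 with m = lcm(m_1,...,m_r) and m' = lcm(2, b, m_1,...,m_r) where b is the denominator of ∑_i 1/(2m_i) in lowest terms. Define H(d) as in the non-orientable closed orbifold homomorphism count (H(d) = d^{g-1}∏φ(m_i) for odd d with all m_i | d; H(d) = 2d^{g-1}∏φ(m_i) for even d with all m_i | d and ∑ d/m_i even; 0 otherwise). Then ∑_{d|l} μ(l/d) H(d) = 2(m')^{g-1}·J_{g-1}(l/m')·∏φ(m_i) − m^{g-1}·J_{g-1}(l/(2m))·∏φ(m_i), where each Jordan-totient term is interpreted as 0 when its argument is not a positive integer. -/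
import Mathlib

open ArithmeticFunction

/-- The Jordan totient function, as the Möbius inverse of `n ↦ n ^ t`:
`J_t(n) = ∑_{d ∣ n} μ(n/d) d^t`. -/
def jordanTotient (t n : ℕ) : ℤ :=
  ∑ d ∈ n.divisors, moebius (n / d) * (d : ℤ) ^ t

/-- The number `H(d)` of order-preserving homomorphisms from the fundamental group of a
closed non-orientable orbifold with `g` crosscaps and branch indices `m i` to `ZMod d`. -/
def H (g r : ℕ) (m : Fin r → ℕ) (d : ℕ) : ℤ :=
  if Odd d ∧ ∀ i, m i ∣ d then (d : ℤ) ^ (g - 1) * ∏ i, (Nat.totient (m i) : ℤ)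
  else if Even d ∧ (∀ i, m i ∣ d) ∧ Even (∑ i, d / m i) then
    2 * (d : ℤ) ^ (g - 1) * ∏ i, (Nat.totient (m i) : ℤ)
  else 0

lemma den_dvd_iff' (S : ℚ) (n : ℕ) : (S.den ∣ n) ↔ ∃ z : ℤ, (n : ℚ) * S = z := by
  constructor
  · rintro ⟨c, rfl⟩
    refine ⟨c * S.num, ?_⟩
    push_cast
    rw [mul_comm (S.den : ℚ), mul_assoc, Rat.den_mul_eq_num, mul_comm]
  · rintro ⟨z, hz⟩
    have h : (n : ℤ) * S.num = z * S.den := by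
      have := congrArg (· * (S.den : ℚ)) hz
      simp only [mul_assoc, Rat.mul_den_eq_num] at this
      exact_mod_cast this
    have hdvd : (S.den : ℤ) ∣ (n : ℤ) * S.num := h ▸ Dvd.intro_left z rfl
    have : S.den ∣ n * S.num.natAbs := by
      have := Int.natAbs_dvd_natAbs.mpr hdvd
      simpa [Int.natAbs_mul] using this
    exact (Nat.Coprime.dvd_of_dvd_mul_right (Nat.Coprime.symm S.reduced) this)

lemma condB {r : ℕ} (m : Fin r → ℕ) (hm : ∀ i, 1 < m i) (d : ℕ) (hdm : ∀ i, m i ∣ d) :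
    Even (∑ i, d / m i) ↔ (∑ i, (1 : ℚ) / (2 * (m i : ℚ))).den ∣ d := by
  have hm0 : ∀ i, (m i : ℚ) ≠ 0 := fun i => Nat.cast_ne_zero.mpr (by have := hm i; omega)
  have hcast : ((∑ i, d / m i : ℕ) : ℚ) = 2 * ((d : ℚ) * ∑ i, (1 : ℚ) / (2 * (m i : ℚ))) := by
    rw [Nat.cast_sum, Finset.mul_sum, Finset.mul_sum]
    refine Finset.sum_congr rfl fun i _ => ?_
    rw [Nat.cast_div (hdm i) (hm0 i)]
    rw [mul_one_div, ← mul_div_assoc, mul_div_mul_left _ _ (two_ne_zero : (2:ℚ) ≠ 0)]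
  rw [den_dvd_iff']
  constructor
  · rintro ⟨c, hc⟩
    refine ⟨c, ?_⟩
    have : ((∑ i, d / m i : ℕ) : ℚ) = 2 * (c : ℚ) := by rw [hc]; push_cast; ring
    rw [this] at hcast
    have := mul_left_cancel₀ (two_ne_zero (α := ℚ)) hcast
    exact_mod_cast this.symm
  · rintro ⟨z, hz⟩
    rw [hz] at hcast
    have h2 : ((∑ i, d / m i : ℕ) : ℤ) = 2 * z := by
      have h3 : (((∑ i, d / m i : ℕ) : ℤ) : ℚ) = ((2 * z : ℤ) : ℚ) := by
        rw [Int.cast_natCast, hcast]; push_cast; ring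
      exact_mod_cast h3
    have : Even ((∑ i, d / m i : ℕ) : ℤ) := ⟨z, by omega⟩
    exact_mod_cast this

lemma sumA (t N n : ℕ) (hn : n ≠ 0) (hN : N ∣ n) :
    ∑ d ∈ n.divisors, (if N ∣ d then (moebius (n / d) : ℤ) * (d : ℤ) ^ t else 0)
      = (N : ℤ) ^ t * jordanTotient t (n / N) := by
  have hN0 : N ≠ 0 := fun h => hn (by simpa [h] using hN)
  have hnN0 : n / N ≠ 0 := by
    simpa [Nat.div_ne_zero_iff, hN0] using Nat.le_of_dvd (Nat.pos_of_ne_zero hn) hN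
  rw [← Finset.sum_filter, jordanTotient, Finset.mul_sum]
  refine Finset.sum_nbij' (fun d => d / N) (fun e => N * e) ?_ ?_ ?_ ?_ ?_
  · intro d hd
    simp only [Finset.mem_filter, Nat.mem_divisors] at hd
    obtain ⟨⟨hdn, -⟩, hNd⟩ := hd
    simp only [Nat.mem_divisors]
    exact ⟨(Nat.dvd_div_iff_mul_dvd hN).2 (by rwa [Nat.mul_div_cancel' hNd]), hnN0⟩
  · intro e he
    simp only [Nat.mem_divisors] at he
    simp only [Finset.mem_filter, Nat.mem_divisors]
    exact ⟨⟨(Nat.dvd_div_iff_mul_dvd hN).1 he.1, hn⟩, Dvd.intro e rfl⟩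
  · intro d hd
    simp only [Finset.mem_filter] at hd
    exact Nat.mul_div_cancel' hd.2
  · intro e _
    exact Nat.mul_div_cancel_left e (Nat.pos_of_ne_zero hN0)
  · intro d hd
    simp only [Finset.mem_filter, Nat.mem_divisors] at hd
    obtain ⟨⟨hdn, -⟩, c, rfl⟩ := hd
    rw [Nat.mul_div_cancel_left c (Nat.pos_of_ne_zero hN0),
      Nat.div_div_eq_div_mul]
    push_cast
    ring

/-- Let `l = 2k` with `k` odd, `g ≥ 1`, branch indices `m i > 1`, `M = lcm(m i)` and
`m' = lcm(2, b, m 1, …, m r)` where `b` is the denominator of `∑ 1/(2 m i)` in lowest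
terms.  Then `∑_{d ∣ l} μ(l/d) H(d) =
2 (m')^(g-1) J_(g-1)(l/m') ∏ φ(m i) − M^(g-1) J_(g-1)(l/(2M)) ∏ φ(m i)`, where each
Jordan-totient term is interpreted as `0` when its argument is not a positive integer. -/
theorem stmt_17 (l k : ℕ) (hk : Odd k) (hl : l = 2 * k)
    (g r : ℕ) (hg : 1 ≤ g) (m : Fin r → ℕ) (hm : ∀ i, 1 < m i) :
    (∑ d ∈ l.divisors, moebius (l / d) * H g r m d) =
      (if Nat.lcm 2 (Nat.lcm (∑ i, (1 : ℚ) / (2 * (m i : ℚ))).den (Finset.univ.lcm m)) ∣ l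
       then
         2 * (Nat.lcm 2
               (Nat.lcm (∑ i, (1 : ℚ) / (2 * (m i : ℚ))).den (Finset.univ.lcm m)) : ℤ) ^
             (g - 1) *
           jordanTotient (g - 1)
             (l / Nat.lcm 2
               (Nat.lcm (∑ i, (1 : ℚ) / (2 * (m i : ℚ))).den (Finset.univ.lcm m))) *
           ∏ i, (Nat.totient (m i) : ℤ)
       else 0) -
      (if 2 * Finset.univ.lcm m ∣ l then
         ((Finset.univ.lcm m : ℕ) : ℤ) ^ (g - 1) *
           jordanTotient (g - 1) (l / (2 * Finset.univ.lcm m)) *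
           ∏ i, (Nat.totient (m i) : ℤ)
       else 0) := by
  have hk0 : k ≠ 0 := by rintro rfl; exact (Nat.not_odd_iff_even.mpr Even.zero) hk
  have hl0 : l ≠ 0 := by rw [hl]; positivity
  set b : ℕ := (∑ i, (1 : ℚ) / (2 * (m i : ℚ))).den with hbdef
  set M : ℕ := Finset.univ.lcm m with hMdef
  set m' : ℕ := Nat.lcm 2 (Nat.lcm b M) with hm'def
  set P : ℤ := ∏ i, (Nat.totient (m i) : ℤ) with hPdef
  set t : ℕ := g - 1 with htdef
  have hMdvd : ∀ d : ℕ, (∀ i, m i ∣ d) ↔ M ∣ d := fun d =>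
    ⟨fun h => Finset.lcm_dvd fun i _ => h i,
     fun h i => dvd_trans (Finset.dvd_lcm (Finset.mem_univ i)) h⟩
  have hm'dvd : ∀ d : ℕ, m' ∣ d ↔ (2 ∣ d ∧ b ∣ d ∧ M ∣ d) := fun d => by
    rw [hm'def, Nat.lcm_dvd_iff, Nat.lcm_dvd_iff]
  -- pointwise split of H
  have hsplit : ∀ d ∈ l.divisors, (moebius (l / d) : ℤ) * H g r m d
      = (if Odd d ∧ M ∣ d then (moebius (l / d) : ℤ) * (d : ℤ) ^ t else 0) * P
        + (if m' ∣ d then (moebius (l / d) : ℤ) * (2 * (d : ℤ) ^ t) else 0) * P := by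
    intro d _
    by_cases h1 : Odd d ∧ ∀ i, m i ∣ d
    · have hm'd : ¬ m' ∣ d := by
        intro hc
        exact (Nat.not_even_iff_odd.mpr h1.1) (even_iff_two_dvd.mpr ((hm'dvd d).mp hc).1)
      rw [H, if_pos h1, if_pos ⟨h1.1, (hMdvd d).mp h1.2⟩, if_neg hm'd]
      ring
    · have hnot1 : ¬ (Odd d ∧ M ∣ d) := fun hc => h1 ⟨hc.1, (hMdvd d).mpr hc.2⟩
      by_cases h2 : m' ∣ d
      · obtain ⟨h2d, hbd, hMd⟩ := (hm'dvd d).mp h2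
        have hmi : ∀ i, m i ∣ d := (hMdvd d).mpr hMd
        have hev : Even (∑ i, d / m i) := (condB m hm d hmi).mpr hbd
        rw [H, if_neg h1, if_pos ⟨even_iff_two_dvd.mpr h2d, hmi, hev⟩, if_neg hnot1,
          if_pos h2]
        ring
      · have hnot2 : ¬ (Even d ∧ (∀ i, m i ∣ d) ∧ Even (∑ i, d / m i)) := by
          rintro ⟨hed, hmi, hev⟩
          exact h2 ((hm'dvd d).mpr ⟨even_iff_two_dvd.mp hed, (condB m hm d hmi).mp hev,
            (hMdvd d).mp hmi⟩)
        rw [H, if_neg h1, if_neg hnot2, if_neg hnot1, if_neg h2]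
        ring
  rw [Finset.sum_congr rfl hsplit, Finset.sum_add_distrib]
  -- even part
  have heven : (∑ d ∈ l.divisors,
        (if m' ∣ d then (moebius (l / d) : ℤ) * (2 * (d : ℤ) ^ t) else 0) * P)
      = (if m' ∣ l then 2 * (m' : ℤ) ^ t * jordanTotient t (l / m') * P else 0) := by
    by_cases hm'l : m' ∣ l
    · rw [if_pos hm'l]
      have step : ∀ d ∈ l.divisors,
          (if m' ∣ d then (moebius (l / d) : ℤ) * (2 * (d : ℤ) ^ t) else 0) * P
            = (2 * P) * (if m' ∣ d then (moebius (l / d) : ℤ) * (d : ℤ) ^ t else 0) := by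
        intro d _; split <;> ring
      rw [Finset.sum_congr rfl step, ← Finset.mul_sum, sumA t m' l hl0 hm'l]
      ring
    · rw [if_neg hm'l]
      refine Finset.sum_eq_zero fun d hd => ?_
      rw [if_neg, zero_mul]
      intro hc
      exact hm'l (hc.trans (Nat.mem_divisors.mp hd).1)
  -- odd part
  have hodd : (∑ d ∈ l.divisors,
        (if Odd d ∧ M ∣ d then (moebius (l / d) : ℤ) * (d : ℤ) ^ t else 0) * P)
      = -(if 2 * M ∣ l then (M : ℤ) ^ t * jordanTotient t (l / (2 * M)) * P else 0) := by
    by_cases h2Ml : 2 * M ∣ l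
    · have hMk : M ∣ k := (Nat.mul_dvd_mul_iff_left (by norm_num : 0 < 2)).mp (hl ▸ h2Ml)
      have hkl : k ∣ l := hl ▸ dvd_mul_left k 2
      have hsub := Nat.divisors_subset_of_dvd hl0 hkl
      have hvan : ∀ d ∈ l.divisors, d ∉ k.divisors →
          (if Odd d ∧ M ∣ d then (moebius (l / d) : ℤ) * (d : ℤ) ^ t else 0) * P = 0 := by
        intro d hd hdk
        rw [if_neg, zero_mul]
        rintro ⟨hoddd, -⟩
        have hdl : d ∣ l := (Nat.mem_divisors.mp hd).1
        have : d ∣ k := (Nat.coprime_two_right.mpr hoddd).dvd_of_dvd_mul_left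
          (by rwa [← hl] )
        exact hdk (Nat.mem_divisors.mpr ⟨this, hk0⟩)
      rw [← Finset.sum_subset hsub hvan]
      have step : ∀ d ∈ k.divisors,
          (if Odd d ∧ M ∣ d then (moebius (l / d) : ℤ) * (d : ℤ) ^ t else 0) * P
            = (-P) * (if M ∣ d then (moebius (k / d) : ℤ) * (d : ℤ) ^ t else 0) := by
        intro d hd
        obtain ⟨hdk, -⟩ := Nat.mem_divisors.mp hd
        have hoddd : Odd d := by
          rcases Nat.even_or_odd d with he | ho
          · exact absurd (even_iff_two_dvd.mpr ((even_iff_two_dvd.mp he).trans hdk))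
              (Nat.not_even_iff_odd.mpr hk)
          · exact ho
        have hld : l / d = 2 * (k / d) := by rw [hl, Nat.mul_div_assoc 2 hdk]
        have hodq : Odd (k / d) := by
          rcases Nat.even_or_odd (k / d) with he | ho
          · exact absurd (even_iff_two_dvd.mpr ((even_iff_two_dvd.mp he).trans
              (Nat.div_dvd_of_dvd hdk))) (Nat.not_even_iff_odd.mpr hk)
          · exact ho
        have hmu : (moebius (l / d) : ℤ) = - moebius (k / d) := by
          rw [hld, isMultiplicative_moebius.map_mul_of_coprime
            (Nat.coprime_two_left.mpr hodq), moebius_apply_prime Nat.prime_two]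
          ring
        by_cases hMd : M ∣ d
        · rw [if_pos ⟨hoddd, hMd⟩, if_pos hMd, hmu]; ring
        · rw [if_neg (fun hc => hMd hc.2), if_neg hMd]; ring
      rw [Finset.sum_congr rfl step, ← Finset.mul_sum, sumA t M k hk0 hMk, if_pos h2Ml]
      have : l / (2 * M) = k / M := by
        rw [hl, Nat.mul_div_mul_left _ _ (by norm_num : 0 < 2)]
      rw [this]
      ring
    · rw [if_neg h2Ml, neg_zero]
      refine Finset.sum_eq_zero fun d hd => ?_
      rw [if_neg, zero_mul]
      rintro ⟨hoddd, hMd⟩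
      have hdl : d ∣ l := (Nat.mem_divisors.mp hd).1
      have hdk : d ∣ k := (Nat.coprime_two_right.mpr hoddd).dvd_of_dvd_mul_left
        (by rwa [← hl])
      exact h2Ml (by rw [hl]; exact Nat.mul_dvd_mul_left 2 (hMd.trans hdk))
  rw [heven, hodd]
  ring
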